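/- Suppose κ is inaccessible and H is an ideal on P_κ(λ) with cof(H) < cov(M_{κ,κ}), and let A ∈ H⁺. Then there is C ∈ H⁺ ∩ P(A) such that [C]_κ² = [C]_≺². -/

import Mathlib

open Cardinal Set

namespace PaperFormal

noncomputable section

/-- The least (small) cardinality of a family `F : Set X` satisfying `P`. -/
def leastCard {X : Type 1} (P : Set X → Prop) : Cardinal.{0} :=
  sInf {c : Cardinal.{0} | ∃ F : Set X, P F ∧ Cardinal.lift.{1} c = #F}

/-- The collection of (codings of) functions from `κ` to `κ`. -/
def funOn (κ : Cardinal.{0}) : Set (Ordinal.{0} → Ordinal.{0}) :=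
  {f | ∀ α < κ.ord, f α < κ.ord}

/-- The unequality number `U_κ`. -/
def uneq (κ : Cardinal.{0}) : Cardinal.{0} :=
  leastCard fun F : Set (Ordinal.{0} → Ordinal.{0}) => F ⊆ funOn κ ∧
    ∀ g ∈ funOn κ, ∃ f ∈ F, {α | α < κ.ord ∧ f α = g α} = ∅

/-- The dominating number `d_κ`. -/
def domNum (κ : Cardinal.{0}) : Cardinal.{0} :=
  leastCard fun F : Set (Ordinal.{0} → Ordinal.{0}) => F ⊆ funOn κ ∧
    ∀ g ∈ funOn κ, ∃ f ∈ F, ∀ α < κ.ord, g α < f α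

/-- The number `d̄_κ`. -/
def domBar (κ : Cardinal.{0}) : Cardinal.{0} :=
  leastCard fun X : Set (Ordinal.{0} → Ordinal.{0}) => X ⊆ funOn κ ∧
    ∀ g ∈ funOn κ, ∃ x ⊆ X, x.Nonempty ∧ #x < Cardinal.lift.{1} κ ∧
      ∀ α < κ.ord, g α < sSup {o | ∃ f ∈ x, f α = o}

/-- The generalized Cantor space `^ρ2`, with points coded as subsets of `Iio ρ.ord`. -/
def cantor (ρ : Cardinal.{0}) : Set (Set Ordinal.{0}) := {x | x ⊆ Iio ρ.ord}

/-- A forcing condition: a pair `(a, t)` with `t ⊆ a ⊆ Iio ρ.ord` and `|a| < ν`. -/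
def IsCond (ν ρ : Cardinal.{0}) (a t : Set Ordinal.{0}) : Prop :=
  a ⊆ Iio ρ.ord ∧ t ⊆ a ∧ #a < Cardinal.lift.{1} ν

/-- The basic open set determined by a condition. -/
def basicOpen (ρ : Cardinal.{0}) (a t : Set Ordinal.{0}) : Set (Set Ordinal.{0}) :=
  {x | x ⊆ Iio ρ.ord ∧ x ∩ a = t}

/-- Dense open subsets of `^ρ2` (for the `<ν`-support topology). -/
def DenseOpen (ν ρ : Cardinal.{0}) (D : Set (Set Ordinal.{0})) : Prop :=
  D ⊆ cantor ρ ∧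
  (∀ x ∈ D, ∃ a t, IsCond ν ρ a t ∧ x ∈ basicOpen ρ a t ∧ basicOpen ρ a t ⊆ D) ∧
  (∀ a t, IsCond ν ρ a t → (basicOpen ρ a t ∩ D).Nonempty)

/-- Members of `M_{ν,ρ}`. -/
def Meager (ν ρ : Cardinal.{0}) (W : Set (Set Ordinal.{0})) : Prop :=
  W ⊆ cantor ρ ∧ ∃ X : Set (Set (Set Ordinal.{0})), X.Nonempty ∧
    #X ≤ Cardinal.lift.{1} ν ∧ (∀ D ∈ X, DenseOpen ν ρ D) ∧ W ∩ ⋂₀ X = ∅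

/-- The covering number for category `cov(M_{ν,ρ})`. -/
def covM (ν ρ : Cardinal.{0}) : Cardinal.{0} :=
  leastCard fun Y : Set (Set (Set Ordinal.{0})) =>
    (∀ W ∈ Y, Meager ν ρ W) ∧ ⋃₀ Y = cantor ρ

/-- A (`κ`-complete) ideal on `κ`. -/
structure IdealK (κ : Cardinal.{0}) where
  mem : Set (Set Ordinal.{0})
  subset_iio : ∀ A ∈ mem, A ⊆ Iio κ.ord
  singleton_mem : ∀ α < κ.ord, {α} ∈ mem
  subset_mem : ∀ A ∈ mem, ∀ B ⊆ A, B ∈ mem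
  sUnion_mem : ∀ X : Set (Set Ordinal.{0}), X ⊆ mem → #X < Cardinal.lift.{1} κ → ⋃₀ X ∈ mem
  ne_top : Iio κ.ord ∉ mem

/-- `J⁺`, the sets (⊆ κ) not in the ideal. -/
def IdealK.plus {κ : Cardinal.{0}} (J : IdealK κ) : Set (Set Ordinal.{0}) :=
  {A | A ⊆ Iio κ.ord ∧ A ∉ J.mem}

/-- `cof(J)`. -/
def IdealK.cof {κ : Cardinal.{0}} (J : IdealK κ) : Cardinal.{0} :=
  leastCard fun X : Set (Set Ordinal.{0}) =>
    X ⊆ J.mem ∧ ∀ A, A ∈ J.mem ↔ ∃ B ∈ X, A ⊆ B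

/-- `cof̄(J)`. -/
def IdealK.cofBar {κ : Cardinal.{0}} (J : IdealK κ) : Cardinal.{0} :=
  leastCard fun X : Set (Set Ordinal.{0}) =>
    X ⊆ J.mem ∧ ∀ A ∈ J.mem, ∃ x ⊆ X, #x < Cardinal.lift.{1} κ ∧ A ⊆ ⋃₀ x

/-- `non_κ(P)`. -/
def nonK (κ : Cardinal.{0}) (P : IdealK κ → Prop) : Cardinal.{0} :=
  sInf {c | ∃ J : IdealK κ, J.cof = c ∧ ¬ P J}

/-- `non̄_κ(P)`. -/
def nonBarK (κ : Cardinal.{0}) (P : IdealK κ → Prop) : Cardinal.{0} :=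
  sInf {c | ∃ J : IdealK κ, J.cofBar = c ∧ ¬ P J}

/-- Weak `P`-point. -/
def WeakPPoint {κ : Cardinal.{0}} (J : IdealK κ) : Prop :=
  ∀ A ∈ J.plus, ∀ f : Ordinal.{0} → Ordinal.{0},
    (∀ α ∈ A, f α < κ.ord) → (∀ β, {α ∈ A | f α = β} ∈ J.mem) →
    ∃ B ∈ J.plus, B ⊆ A ∧ ∀ β, #{α ∈ B | f α = β} < Cardinal.lift.{1} κ

/-- Weak `Q`-point. -/
def WeakQPoint {κ : Cardinal.{0}} (J : IdealK κ) : Prop :=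
  ∀ A ∈ J.plus, ∀ g ∈ funOn κ,
    ∃ B ∈ J.plus, B ⊆ A ∧ ∀ α ∈ B, ∀ β ∈ B, α < β → g α < β

/-- Weakly selective ideal. -/
def WeaklySelective {κ : Cardinal.{0}} (J : IdealK κ) : Prop :=
  WeakPPoint J ∧ WeakQPoint J

/-- Weak semi-`Q`-point. -/
def WeakSemiQPoint {κ : Cardinal.{0}} (J : IdealK κ) : Prop :=
  ∀ A ∈ J.plus, ∀ f : Ordinal.{0} → Ordinal.{0},
    (∀ α ∈ A, f α < κ.ord) →
    (∀ β, #{α ∈ A | f α = β} < Cardinal.lift.{1} κ) →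
    ∃ C ∈ J.plus, C ⊆ A ∧ ∀ β < κ.ord, #{α ∈ C | f α = β} ≤ Cardinal.lift.{1} β.card

/-- `P_κ(λ)`, coded as the small subsets of `Iio λ.ord`. -/
def smallSet (κ lam : Cardinal.{0}) : Set (Set Ordinal.{0}) :=
  {a | a ⊆ Iio lam.ord ∧ #a < Cardinal.lift.{1} κ}

/-- The ideal `I_{κ,λ}` of noncofinal subsets of `P_κ(λ)`. -/
def Ikl (κ lam : Cardinal.{0}) : Set (Set (Set Ordinal.{0})) :=
  {A | A ⊆ smallSet κ lam ∧ ∃ a ∈ smallSet κ lam, ∀ b ∈ A, ¬ a ⊆ b}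

/-- A (`κ`-complete fine) ideal on `P_κ(λ)`. -/
structure IdealP (κ lam : Cardinal.{0}) where
  mem : Set (Set (Set Ordinal.{0}))
  subset_pk : ∀ A ∈ mem, A ⊆ smallSet κ lam
  fine : Ikl κ lam ⊆ mem
  subset_mem : ∀ A ∈ mem, ∀ B ⊆ A, B ∈ mem
  sUnion_mem : ∀ X : Set (Set (Set Ordinal.{0})), X ⊆ mem →
    #X < Cardinal.lift.{1} κ → ⋃₀ X ∈ mem
  ne_top : smallSet κ lam ∉ mem

/-- `H⁺` computed from the underlying collection `Hm` of an ideal on `P_κ(λ)`. -/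
def plusOf (κ lam : Cardinal.{0}) (Hm : Set (Set (Set Ordinal.{0}))) :
    Set (Set (Set Ordinal.{0})) :=
  {A | A ⊆ smallSet κ lam ∧ A ∉ Hm}

/-- `H⁺`. -/
def IdealP.plus {κ lam : Cardinal.{0}} (H : IdealP κ lam) : Set (Set (Set Ordinal.{0})) :=
  plusOf κ lam H.mem

/-- `cof(H)`. -/
def IdealP.cof {κ lam : Cardinal.{0}} (H : IdealP κ lam) : Cardinal.{0} :=
  leastCard fun X : Set (Set (Set Ordinal.{0})) =>
    X ⊆ H.mem ∧ ∀ A, A ∈ H.mem ↔ ∃ B ∈ X, A ⊆ B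

/-- `cof̄(H)`. -/
def IdealP.cofBar {κ lam : Cardinal.{0}} (H : IdealP κ lam) : Cardinal.{0} :=
  leastCard fun X : Set (Set (Set Ordinal.{0})) =>
    X ⊆ H.mem ∧ ∀ A ∈ H.mem, ∃ x ⊆ X, #x < Cardinal.lift.{1} κ ∧ A ⊆ ⋃₀ x

/-- `d^κ_{κ,λ}`. -/
def domP (κ lam : Cardinal.{0}) : Cardinal.{0} :=
  leastCard fun F : Set (Ordinal.{0} → Set Ordinal.{0}) =>
    (∀ f ∈ F, ∀ α < κ.ord, f α ∈ smallSet κ lam) ∧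
    ∀ g : Ordinal.{0} → Set Ordinal.{0}, (∀ α < κ.ord, g α ∈ smallSet κ lam) →
      ∃ f ∈ F, ∀ α < κ.ord, g α ⊆ f α

/-- A maximal almost disjoint family of size `≥ κ` for `H` (a member of `M_H^{≥κ}`). -/
def IsMad {κ lam : Cardinal.{0}} (H : IdealP κ lam) (Q : Set (Set (Set Ordinal.{0}))) : Prop :=
  Q ⊆ H.plus ∧ Cardinal.lift.{1} κ ≤ #Q ∧
  (∀ A ∈ Q, ∀ B ∈ Q, A ≠ B → A ∩ B ∈ H.mem) ∧
  ∀ C ∈ H.plus, ∃ A ∈ Q, A ∩ C ∈ H.plus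

/-- The (small) cardinal `c` with `lift c = c'`, used to pull `λ^{<κ} = |P_κ(λ)|` down. -/
def downCard (c : Cardinal.{1}) : Cardinal.{0} :=
  sInf {d : Cardinal.{0} | Cardinal.lift.{1} d = c}

open Classical in
/-- The number `a_H`. -/
def aNum {κ lam : Cardinal.{0}} (H : IdealP κ lam) : Cardinal.{0} :=
  if ∃ Q, IsMad H Q then sInf {c | ∃ Q, IsMad H Q ∧ Cardinal.lift.{1} c = #Q}
  else 2 ^ Order.succ (downCard #(smallSet κ lam))

/-- Weak `π`-point. -/
def WeakPiPoint {κ lam : Cardinal.{0}} (H : IdealP κ lam) : Prop :=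
  ∀ f : Ordinal.{0} → Set (Set Ordinal.{0}), (∀ α < κ.ord, f α ∈ H.mem) →
    ∀ A ∈ H.plus, ∃ B ∈ H.plus, B ⊆ A ∧ ∀ α < κ.ord, B ∩ f α ∈ Ikl κ lam

/-- `∪(a ∩ κ)`. -/
def supK (κ : Cardinal.{0}) (a : Set Ordinal.{0}) : Ordinal.{0} :=
  sSup (a ∩ Iio κ.ord)

/-- The relation `a ≺ b`. -/
def prec (κ : Cardinal.{0}) (a b : Set Ordinal.{0}) : Prop :=
  a ⊆ b ∧ supK κ a < supK κ b

/-- `[A]_κ²`. -/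
def pairsK (κ : Cardinal.{0}) (A : Set (Set Ordinal.{0})) : Set (Ordinal.{0} × Set Ordinal.{0}) :=
  {p | ∃ a ∈ A, ∃ b ∈ A, supK κ a < supK κ b ∧ p = (supK κ a, b)}

/-- `[A]_≺²`. -/
def pairsPrec (κ : Cardinal.{0}) (A : Set (Set Ordinal.{0})) :
    Set (Ordinal.{0} × Set Ordinal.{0}) :=
  {p | ∃ a ∈ A, ∃ b ∈ A, prec κ a b ∧ p = (supK κ a, b)}

/-- `[A]_{κ,κ}²`. -/
def pairsKK (κ : Cardinal.{0}) (A : Set (Set Ordinal.{0})) : Set (Ordinal.{0} × Ordinal.{0}) :=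
  {p | ∃ a ∈ A, ∃ b ∈ A, supK κ a < supK κ b ∧ p = (supK κ a, supK κ b)}

/-- `S` is a set of ordinals of order type `α`. -/
def OrdType (S : Set Ordinal.{0}) (α : Ordinal.{0}) : Prop :=
  ∃ e : Ordinal.{0} → Ordinal.{0},
    (∀ i < α, ∀ j < α, i < j → e i < e j) ∧ e '' Iio α = S

/-- `(B, ≺)` has order type `α`. -/
def OrdTypePrec (κ : Cardinal.{0}) (B : Set (Set Ordinal.{0})) (α : Ordinal.{0}) : Prop :=
  ∃ e : Ordinal.{0} → Set Ordinal.{0},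
    (∀ i < α, ∀ j < α, i < j → prec κ (e i) (e j)) ∧ e '' Iio α = B

/-- The partition relation `κ → (κ, θ)²`. -/
def ArrowKTheta (κ : Cardinal.{0}) (θ : Ordinal.{0}) : Prop :=
  ∀ f : Ordinal.{0} → Ordinal.{0} → Fin 2, ∃ A ⊆ Iio κ.ord,
    (OrdType A κ.ord ∧ ∀ α ∈ A, ∀ β ∈ A, α < β → f α β = 0) ∨
    (OrdType A θ ∧ ∀ α ∈ A, ∀ β ∈ A, α < β → f α β = 1)

/-- `κ` is weakly compact. -/
def WeaklyCompact (κ : Cardinal.{0}) : Prop :=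
  ∀ f : Ordinal.{0} → Ordinal.{0} → Fin 2, ∃ A ⊆ Iio κ.ord,
    OrdType A κ.ord ∧ ∃ i, ∀ α ∈ A, ∀ β ∈ A, α < β → f α β = i

/-- The partition relation `J⁺ → (J⁺, α)²` for an ideal on `κ`. -/
def ArrowJ {κ : Cardinal.{0}} (J : IdealK κ) (α : Ordinal.{0}) : Prop :=
  ∀ A ∈ J.plus, ∀ f : Ordinal.{0} → Ordinal.{0} → Fin 2,
    ∃ B ⊆ A, (B ∈ J.plus ∧ ∀ β ∈ B, ∀ γ ∈ B, β < γ → f β γ = 0) ∨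
             (OrdType B α ∧ ∀ β ∈ B, ∀ γ ∈ B, β < γ → f β γ = 1)

/-- The square bracket relation `J⁺ → [J⁺]_ρ²` for an ideal on `κ`. -/
def SqBrJ {κ : Cardinal.{0}} (J : IdealK κ) (ρ : Cardinal.{0}) : Prop :=
  ∀ A ∈ J.plus, ∀ f : Ordinal.{0} → Ordinal.{0} → Ordinal.{0},
    (∀ β ∈ A, ∀ γ ∈ A, β < γ → f β γ < ρ.ord) →
    ∃ B ∈ J.plus, B ⊆ A ∧ {ξ | ∃ β ∈ B, ∃ γ ∈ B, β < γ ∧ f β γ = ξ} ≠ Iio ρ.ord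

/-- `H⁺ →_κ (H⁺, α)²`. -/
def ArrowP (κ lam : Cardinal.{0}) (Hm : Set (Set (Set Ordinal.{0}))) (α : Ordinal.{0}) : Prop :=
  ∀ F : Ordinal.{0} → Set Ordinal.{0} → Fin 2, ∀ A ∈ plusOf κ lam Hm,
    ∃ B ⊆ A, (B ∈ plusOf κ lam Hm ∧ ∀ p ∈ pairsK κ B, F p.1 p.2 = 0) ∨
             (OrdTypePrec κ B α ∧ ∀ p ∈ pairsK κ B, F p.1 p.2 = 1)

/-- `H⁺ →_{κ,κ} (H⁺, α)²`. -/
def ArrowPKK (κ lam : Cardinal.{0}) (Hm : Set (Set (Set Ordinal.{0}))) (α : Ordinal.{0}) : Prop :=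
  ∀ F : Ordinal.{0} → Ordinal.{0} → Fin 2, ∀ A ∈ plusOf κ lam Hm,
    ∃ B ⊆ A, (B ∈ plusOf κ lam Hm ∧ ∀ p ∈ pairsKK κ B, F p.1 p.2 = 0) ∨
             (OrdTypePrec κ B α ∧ ∀ p ∈ pairsKK κ B, F p.1 p.2 = 1)

/-- `H⁺ →_{κ,κ} (H⁺; α)²`. -/
def ArrowPKKsemi (κ lam : Cardinal.{0}) (Hm : Set (Set (Set Ordinal.{0}))) (α : Ordinal.{0}) :
    Prop :=
  ∀ F : Ordinal.{0} → Ordinal.{0} → Fin 2, ∀ A ∈ plusOf κ lam Hm,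
    ∃ B ⊆ A, (B ∈ plusOf κ lam Hm ∧ ∀ p ∈ pairsKK κ B, F p.1 p.2 = 0) ∨
             (OrdType {o | ∃ a ∈ B, supK κ a = o} α ∧ ∀ p ∈ pairsKK κ B, F p.1 p.2 = 1)

/-- `H⁺ →_κ (H⁺)²`. -/
def ArrowPConst (κ lam : Cardinal.{0}) (Hm : Set (Set (Set Ordinal.{0}))) : Prop :=
  ∀ F : Ordinal.{0} → Set Ordinal.{0} → Fin 2, ∀ A ∈ plusOf κ lam Hm,
    ∃ B ∈ plusOf κ lam Hm, B ⊆ A ∧ ∃ i, ∀ p ∈ pairsK κ B, F p.1 p.2 = i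

/-- `H⁺ →_{κ,κ} [H⁺]_ρ²`. -/
def SqBrPKK (κ lam : Cardinal.{0}) (Hm : Set (Set (Set Ordinal.{0}))) (ρ : Cardinal.{0}) : Prop :=
  ∀ F : Ordinal.{0} → Ordinal.{0} → Ordinal.{0},
    (∀ α β : Ordinal.{0}, α < β → β < κ.ord → F α β < ρ.ord) →
    ∀ A ∈ plusOf κ lam Hm, ∃ B ∈ plusOf κ lam Hm, B ⊆ A ∧
      {ξ | ∃ p ∈ pairsKK κ B, F p.1 p.2 = ξ} ≠ Iio ρ.ord

/-- The class `K(κ,λ)`. -/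
def Kset (κ lam : Cardinal.{0}) : Set Cardinal.{0} :=
  {σ | lam ≤ σ ∧ ∃ T ⊆ smallSet κ lam, Cardinal.lift.{1} σ = #T ∧
    ∀ a ∈ smallSet κ lam, #{t ∈ T | t ⊆ a} < Cardinal.lift.{1} κ}

end

end PaperFormal

/-! A point `x ⊆ κ` of the Cantor space codes a chain through `A`: at each level `β ∈ x` pick,
if possible, some `w ∈ A` with `∪(w ∩ κ) = β` containing every earlier pick. Let `C_x` consist of
the `b ∈ A` whose level was picked and which contain every pick below their level. The pick at
the level of `a ∈ C_x` is again in `C_x` and is `≺` every `b ∈ C_x` of higher level, so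
`[C_x]_κ² = [C_x]_≺²`.

For `D ∈ H` the points `x` with `C_x ⊄ D` form a dense open set: to extend a condition, fineness
of `H` gives `b ∈ A ∖ D` containing all picks the condition allows, and one activates the level
of `b`. A cofinal subfamily of `H` of size `cof(H) < cov(M_{κ,κ})` yields fewer than
`cov(M_{κ,κ})` such sets, so some `x` lies in all of them, and then `C_x ∈ H⁺`. -/

namespace PaperFormal

universe u

section Cardinals

theorem lift_leastCard_le {X : Type 1} {P : Set X → Prop} {F : Set X} (hF : P F) :
    Cardinal.lift.{1} (leastCard P) ≤ #F := by
  by_cases hsmall : #F < Cardinal.univ.{0, 1}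
  · obtain ⟨c, hc⟩ := Cardinal.lt_univ.1 hsmall
    exact hc ▸ Cardinal.lift_le.2 (csInf_le (OrderBot.bddBelow _) ⟨F, hF, hc.symm⟩)
  · exact (Cardinal.lift_lt_univ _).le.trans (not_lt.1 hsmall)

theorem exists_lift_leastCard_eq {X : Type 1} {P : Set X → Prop} {F : Set X} (hF : P F)
    (hsmall : #F < Cardinal.univ.{0, 1}) :
    ∃ F', P F' ∧ Cardinal.lift.{1} (leastCard P) = #F' := by
  obtain ⟨c, hc⟩ := Cardinal.lt_univ.1 hsmall
  exact csInf_mem (s := {c | ∃ F, P F ∧ Cardinal.lift.{1} c = #F}) ⟨c, F, hF, hc.symm⟩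

theorem sSup_lt_ord_of_isRegular {κ : Cardinal.{u}} (hκ : κ.IsRegular) {s : Set Ordinal.{u}}
    (hs : #s < Cardinal.lift.{u + 1} κ) (hlt : ∀ o ∈ s, o < κ.ord) : sSup s < κ.ord :=
  Ordinal.sSup_lt_of_lt_cof (by rwa [← Ordinal.lift_cof, hκ.cof_ord]) hlt

end Cardinals

section SupK

variable {κ : Cardinal.{0}}

theorem supK_lt_ord (hκ : κ.IsRegular) {b : Set Ordinal.{0}} (hb : #b < Cardinal.lift.{1} κ) :
    supK κ b < κ.ord :=
  sSup_lt_ord_of_isRegular hκ ((mk_le_mk_of_subset inter_subset_left).trans_lt hb)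
    fun _ h => h.2

theorem le_supK {b : Set Ordinal.{0}} {β : Ordinal.{0}} (hβb : β ∈ b) (hβ : β < κ.ord) :
    β ≤ supK κ b :=
  le_csSup ⟨κ.ord, fun _ h => h.2.le⟩ ⟨hβb, hβ⟩

theorem pairsK_eq_pairsPrec_of_forall_exists {C : Set (Set Ordinal.{0})}
    (hC : ∀ a ∈ C, ∀ b ∈ C, supK κ a < supK κ b → ∃ a' ∈ C, supK κ a' = supK κ a ∧ a' ⊆ b) :
    pairsK κ C = pairsPrec κ C := by
  refine Subset.antisymm ?_ fun p ⟨a, ha, b, hb, hab, hp⟩ => ⟨a, ha, b, hb, hab.2, hp⟩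
  rintro p ⟨a, ha, b, hb, hab, rfl⟩
  obtain ⟨a', ha', hsup, ha'b⟩ := hC a ha b hb hab
  exact ⟨a', ha', b, hb, ⟨ha'b, hsup ▸ hab⟩, by rw [hsup]⟩

theorem insert_mem_smallSet {lam : Cardinal.{0}} (hκ : ℵ₀ ≤ κ) {u : Set Ordinal.{0}}
    (hu : u ∈ smallSet κ lam) {β : Ordinal.{0}} (hβ : β < lam.ord) :
    insert β u ∈ smallSet κ lam :=
  ⟨insert_subset hβ hu.1, mk_insert_le.trans_lt <| add_lt_of_lt (aleph0_le_lift.2 hκ) hu.2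
    (one_lt_aleph0.trans_le (aleph0_le_lift.2 hκ))⟩

end SupK

namespace IdealP

variable {κ lam : Cardinal.{0}} (H : IdealP κ lam)

theorem exists_superset_of_mem_plus {T : Set (Set Ordinal.{0})} (hT : T ∈ H.plus)
    {a : Set Ordinal.{0}} (ha : a ∈ smallSet κ lam) : ∃ b ∈ T, a ⊆ b := by
  by_contra! h
  exact hT.2 (H.fine ⟨hT.1, a, ha, h⟩)

theorem union_mem (hκ : 2 < κ) {B B' : Set (Set Ordinal.{0})} (hB : B ∈ H.mem)
    (hB' : B' ∈ H.mem) : B ∪ B' ∈ H.mem := by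
  rw [← sUnion_pair]
  refine H.sUnion_mem _ (pair_subset hB hB') ?_
  calc #({B, B'} : Set (Set (Set Ordinal.{0}))) ≤ #({B'} : Set (Set (Set Ordinal.{0}))) + 1 :=
        mk_insert_le
    _ = 2 := by rw [mk_singleton, one_add_one_eq_two]
    _ < Cardinal.lift.{1} κ := by simpa using hκ

theorem diff_mem_plus (hκ : 2 < κ) {A D : Set (Set Ordinal.{0})} (hA : A ∈ H.plus)
    (hD : D ∈ H.mem) : A \ D ∈ H.plus :=
  ⟨sdiff_subset.trans hA.1,
    fun h => hA.2 (H.subset_mem _ (H.union_mem hκ h hD) A (subset_sdiff_union A D))⟩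

theorem mk_mem_lt_univ : #H.mem < Cardinal.univ.{0, 1} :=
  calc #H.mem ≤ #(𝒫 𝒫 Iio lam.ord) :=
        mk_le_mk_of_subset fun B hB _ hb => (H.subset_pk B hB hb).1
    _ = Cardinal.lift.{1} ((2 : Cardinal.{0}) ^ (2 : Cardinal.{0}) ^ lam) := by
        rw [mk_powerset, mk_powerset, mk_Iio_ordinal, card_ord, lift_two_power, lift_two_power]
    _ < Cardinal.univ.{0, 1} := lift_lt_univ _

theorem exists_cofinal_family : ∃ F ⊆ H.mem, (∀ B ∈ H.mem, ∃ B' ∈ F, B ⊆ B') ∧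
    #F = Cardinal.lift.{1} H.cof := by
  obtain ⟨F, ⟨hFH, hF⟩, hcard⟩ := exists_lift_leastCard_eq
    (P := fun X => X ⊆ H.mem ∧ ∀ A, A ∈ H.mem ↔ ∃ B ∈ X, A ⊆ B)
    ⟨subset_rfl, fun A => ⟨fun h => ⟨A, h, subset_rfl⟩,
      fun ⟨B, hB, hAB⟩ => H.subset_mem B hB A hAB⟩⟩
    H.mk_mem_lt_univ
  exact ⟨F, hFH, fun B hB => (hF B).1 hB, hcard.symm⟩

end IdealP

section Category

variable {ν ρ : Cardinal.{0}}

theorem meager_cantor_diff (hν : ν ≠ 0) {D : Set (Set Ordinal.{0})} (hD : DenseOpen ν ρ D) :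
    Meager ν ρ (cantor ρ \ D) :=
  ⟨sdiff_subset, {D}, singleton_nonempty D,
    by rw [mk_singleton]
       exact Cardinal.one_le_iff_ne_zero.2 (Cardinal.lift_eq_zero.not.2 hν),
    fun _ h => (mem_singleton_iff.1 h) ▸ hD, by rw [sInter_singleton]; exact sdiff_inter_self⟩

theorem exists_mem_sInter_of_mk_lt_covM (hν : ν ≠ 0) {𝒟 : Set (Set (Set Ordinal.{0}))}
    (h𝒟 : ∀ D ∈ 𝒟, DenseOpen ν ρ D) (hcard : #𝒟 < Cardinal.lift.{1} (covM ν ρ)) :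
    ∃ x ∈ cantor ρ, ∀ D ∈ 𝒟, x ∈ D := by
  by_contra! hnone
  have hcover : ⋃₀ ((cantor ρ \ ·) '' 𝒟) = cantor ρ := by
    refine (sUnion_subset ?_).antisymm fun x hx => ?_
    · rintro _ ⟨D, -, rfl⟩
      exact sdiff_subset
    · obtain ⟨D, hD, hxD⟩ := hnone x hx
      exact ⟨_, mem_image_of_mem _ hD, hx, hxD⟩
  have hmeager : ∀ W ∈ (cantor ρ \ ·) '' 𝒟, Meager ν ρ W := by
    rintro _ ⟨D, hD, rfl⟩
    exact meager_cantor_diff hν (h𝒟 D hD)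
  exact ((lift_leastCard_le ⟨hmeager, hcover⟩).trans mk_image_le).not_gt hcard

end Category

section Witness

def candidates (ℓ : Set Ordinal.{0} → Ordinal.{0}) (A : Set (Set Ordinal.{0}))
    (u : Set Ordinal.{0}) (β : Ordinal.{0}) : Set (Set Ordinal.{0}) :=
  {w ∈ A | ℓ w = β ∧ u ⊆ w}

open Classical in
noncomputable def witness (ℓ : Set Ordinal.{0} → Ordinal.{0}) (A : Set (Set Ordinal.{0}))
    (x : Set Ordinal.{0}) (β : Ordinal.{0}) : Option (Set Ordinal.{0}) :=
  if h : β ∈ x ∧ (candidates ℓ A (⋃ γ : Iio β, (witness ℓ A x γ).getD ∅) β).Nonempty then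
    some h.2.some
  else none
termination_by β
decreasing_by exact γ.2

def witnessUnion (ℓ : Set Ordinal.{0} → Ordinal.{0}) (A : Set (Set Ordinal.{0}))
    (x : Set Ordinal.{0}) (β : Ordinal.{0}) : Set Ordinal.{0} :=
  ⋃ γ : Iio β, (witness ℓ A x γ).getD ∅

def chainSet (ℓ : Set Ordinal.{0} → Ordinal.{0}) (A : Set (Set Ordinal.{0}))
    (x : Set Ordinal.{0}) : Set (Set Ordinal.{0}) :=
  {b ∈ A | (witness ℓ A x (ℓ b)).isSome ∧ witnessUnion ℓ A x (ℓ b) ⊆ b}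

variable {ℓ : Set Ordinal.{0} → Ordinal.{0}} {A : Set (Set Ordinal.{0})} {x x' : Set Ordinal.{0}}
  {β γ δ : Ordinal.{0}} {w b : Set Ordinal.{0}}

open Classical in
theorem witness_eq (ℓ : Set Ordinal.{0} → Ordinal.{0}) (A : Set (Set Ordinal.{0}))
    (x : Set Ordinal.{0}) (β : Ordinal.{0}) :
    witness ℓ A x β = if h : β ∈ x ∧ (candidates ℓ A (witnessUnion ℓ A x β) β).Nonempty then
      some h.2.some else none := by
  rw [witness]
  rfl

theorem isSome_witness_iff :
    (witness ℓ A x β).isSome ↔ β ∈ x ∧ (candidates ℓ A (witnessUnion ℓ A x β) β).Nonempty := by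
  rw [witness_eq]
  split_ifs with h <;> simp [h]

theorem witness_spec (h : witness ℓ A x β = some w) :
    β ∈ x ∧ w ∈ candidates ℓ A (witnessUnion ℓ A x β) β := by
  rw [witness_eq] at h
  split_ifs at h with hc
  exact ⟨hc.1, Option.some_injective _ h ▸ hc.2.some_mem⟩

theorem subset_witnessUnion (hγ : γ < β) (h : witness ℓ A x γ = some w) :
    w ⊆ witnessUnion ℓ A x β :=
  subset_iUnion_of_subset ⟨γ, hγ⟩ (by rw [h]; rfl)

theorem witnessUnion_subset_iff :
    witnessUnion ℓ A x β ⊆ b ↔ ∀ γ < β, ∀ w, witness ℓ A x γ = some w → w ⊆ b := by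
  refine ⟨fun hb γ hγ w h => (subset_witnessUnion hγ h).trans hb, fun hb => iUnion_subset ?_⟩
  rintro ⟨γ, hγ⟩
  cases h : witness ℓ A x γ with
  | none => exact empty_subset b
  | some w => exact hb γ hγ w h

theorem witnessUnion_subset_witnessUnion (h : ∀ γ ∈ x, γ < β → γ < δ) :
    witnessUnion ℓ A x β ⊆ witnessUnion ℓ A x δ :=
  witnessUnion_subset_iff.2 fun γ hγ _ hw =>
    subset_witnessUnion (h γ (witness_spec hw).1 hγ) hw

theorem witness_congr (h : ∀ γ < δ, γ ∈ x ↔ γ ∈ x') :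
    ∀ β < δ, witness ℓ A x β = witness ℓ A x' β := by
  intro β
  induction β using WellFoundedLT.induction with
  | ind β ih =>
    intro hβ
    have hunion : witnessUnion ℓ A x β = witnessUnion ℓ A x' β :=
      iUnion_congr fun γ => by rw [ih γ γ.2 (γ.2.trans hβ)]
    rw [witness_eq, witness_eq, hunion, propext (h β hβ)]

theorem witnessUnion_congr (h : ∀ γ < β, γ ∈ x ↔ γ ∈ x') :
    witnessUnion ℓ A x β = witnessUnion ℓ A x' β :=
  iUnion_congr fun γ => by rw [witness_congr h γ γ.2]

theorem mem_chainSet_congr (hb : b ∈ chainSet ℓ A x)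
    (h : ∀ γ ≤ ℓ b, γ ∈ x ↔ γ ∈ x') : b ∈ chainSet ℓ A x' := by
  have hlt : ∀ γ < Order.succ (ℓ b), γ ∈ x ↔ γ ∈ x' :=
    fun γ hγ => h γ (Order.lt_succ_iff.1 hγ)
  refine ⟨hb.1, ?_, ?_⟩
  · rw [← witness_congr hlt _ (Order.lt_succ _)]
    exact hb.2.1
  · rw [← witnessUnion_congr fun γ hγ => hlt γ (hγ.trans (Order.lt_succ _))]
    exact hb.2.2

theorem witness_mem_chainSet (h : witness ℓ A x β = some w) : w ∈ chainSet ℓ A x := by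
  obtain ⟨-, hwA, rfl, hprev⟩ := witness_spec h
  exact ⟨hwA, by simp [h], hprev⟩

theorem witness_subset_of_mem_chainSet (hb : b ∈ chainSet ℓ A x) (hγ : γ < ℓ b)
    (h : witness ℓ A x γ = some w) : w ⊆ b :=
  (subset_witnessUnion hγ h).trans hb.2.2

theorem witnessUnion_mem_smallSet {κ lam : Cardinal.{0}} (hκ : κ.IsRegular)
    (hA : A ⊆ smallSet κ lam) (hβ : β < κ.ord) : witnessUnion ℓ A x β ∈ smallSet κ lam := by
  have hw : ∀ γ : Iio β, (witness ℓ A x γ).getD ∅ ∈ smallSet κ lam := by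
    intro γ
    cases h : witness ℓ A x γ with
    | none => simpa [smallSet] using hκ.pos
    | some w => exact hA (witness_spec h).2.1
  refine ⟨iUnion_subset fun γ => (hw γ).1, ?_⟩
  refine (card_iUnion_lt_iff_forall_of_isRegular hκ.lift ?_).2 fun γ => (hw γ).2
  rw [mk_Iio_ordinal, lift_lt]
  exact lt_ord.1 hβ

end Witness

section EscapeSet

variable {κ lam : Cardinal.{0}} {A D : Set (Set Ordinal.{0})}

theorem pairsK_chainSet_eq_pairsPrec (x : Set Ordinal.{0}) :
    pairsK κ (chainSet (supK κ) A x) = pairsPrec κ (chainSet (supK κ) A x) := by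
  refine pairsK_eq_pairsPrec_of_forall_exists fun a ha b hb hab => ?_
  obtain ⟨w, hw⟩ := Option.isSome_iff_exists.1 ha.2.1
  exact ⟨w, witness_mem_chainSet hw, (witness_spec hw).2.2.1,
    witness_subset_of_mem_chainSet hb hab hw⟩

def escapeSet (κ : Cardinal.{0}) (A D : Set (Set Ordinal.{0})) : Set (Set Ordinal.{0}) :=
  {x ∈ cantor κ | (chainSet (supK κ) A x \ D).Nonempty}

theorem escapeSet_isOpen (hκ : κ.IsRegular) (hA : A ⊆ smallSet κ lam) {x : Set Ordinal.{0}}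
    (hx : x ∈ escapeSet κ A D) :
    ∃ a t, IsCond κ κ a t ∧ x ∈ basicOpen κ a t ∧ basicOpen κ a t ⊆ escapeSet κ A D := by
  obtain ⟨hxκ, b, hbC, hbD⟩ := hx
  set δ := Order.succ (supK κ b)
  have hδ : δ < κ.ord :=
    (isSuccLimit_ord hκ.aleph0_le).succ_lt (supK_lt_ord hκ (hA hbC.1).2)
  refine ⟨Iio δ, x ∩ Iio δ, ⟨Iio_subset_Iio hδ.le, inter_subset_right, ?_⟩, ⟨hxκ, rfl⟩, ?_⟩
  · rw [mk_Iio_ordinal, lift_lt]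
    exact lt_ord.1 hδ
  · rintro x' ⟨hx'κ, hx'⟩
    refine ⟨hx'κ, b, mem_chainSet_congr hbC fun γ hγ => ?_, hbD⟩
    have hγδ : γ < δ := Order.lt_succ_iff.2 hγ
    simpa [hγδ] using (Set.ext_iff.1 hx' γ).symm

theorem escapeSet_dense (hκ : κ.IsRegular) (hκlam : κ ≤ lam) {H : IdealP κ lam}
    (hA : A ∈ H.plus) (hD : D ∈ H.mem) {a t : Set Ordinal.{0}} (hat : IsCond κ κ a t) :
    (basicOpen κ a t ∩ escapeSet κ A D).Nonempty := by
  obtain ⟨haκ, hta, hacard⟩ := hat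
  set β₀ := Order.succ (sSup a)
  have hβ₀ : β₀ < κ.ord :=
    (isSuccLimit_ord hκ.aleph0_le).succ_lt (sSup_lt_ord_of_isRegular hκ hacard haκ)
  have ha : ∀ γ ∈ a, γ < β₀ :=
    fun γ hγ => Order.lt_succ_of_le (le_csSup ⟨κ.ord, fun _ h => (haκ h).le⟩ hγ)
  -- `b` lies above every level the condition decides and contains every pick of `t`, so
  -- activating the level of `b` in `t` puts `b` into the chain set
  have hu : insert β₀ (witnessUnion (supK κ) A t β₀) ∈ smallSet κ lam :=
    insert_mem_smallSet hκ.aleph0_le (witnessUnion_mem_smallSet hκ hA.1 hβ₀)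
      (hβ₀.trans_le (ord_le_ord.2 hκlam))
  have h2κ : 2 < κ := (natCast_lt_aleph0 (n := 2)).trans_le hκ.aleph0_le
  obtain ⟨b, ⟨hbA, hbD⟩, hub⟩ :=
    H.exists_superset_of_mem_plus (H.diff_mem_plus h2κ hA hD) hu
  set β := supK κ b
  have hβ₀β : β₀ ≤ β := le_supK (hub (mem_insert _ _)) hβ₀
  have hβa : β ∉ a := fun h => (ha β h).not_ge hβ₀β
  have hagree : ∀ γ < β, γ ∈ insert β t ↔ γ ∈ t := fun γ hγ => by simp [hγ.ne]
  have hprev : witnessUnion (supK κ) A (insert β t) β ⊆ b := by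
    rw [witnessUnion_congr hagree]
    exact (witnessUnion_subset_witnessUnion fun γ hγ _ => ha γ (hta hγ)).trans
      ((subset_insert _ _).trans hub)
  have hxκ : insert β t ⊆ Iio κ.ord :=
    insert_subset (supK_lt_ord hκ (hA.1 hbA).2) (hta.trans haκ)
  refine ⟨insert β t, ⟨hxκ, ?_⟩, hxκ, b, ⟨hbA, ?_, hprev⟩, hbD⟩
  · rw [insert_inter_of_notMem hβa, inter_eq_left.2 hta]
  · exact isSome_witness_iff.2 ⟨mem_insert _ _, b, hbA, rfl, hprev⟩

theorem denseOpen_escapeSet (hκ : κ.IsRegular) (hκlam : κ ≤ lam) {H : IdealP κ lam}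
    (hA : A ∈ H.plus) (hD : D ∈ H.mem) : DenseOpen κ κ (escapeSet κ A D) :=
  ⟨fun _ hx => hx.1, fun _ hx => escapeSet_isOpen hκ hA.1 hx,
    fun _ _ hat => escapeSet_dense hκ hκlam hA hD hat⟩

end EscapeSet

theorem pairsK_eq_pairsPrec_general (κ lam : Cardinal.{0}) (hreg : κ.IsRegular) (hlt : κ < lam)
    (H : IdealP κ lam) (hcof : H.cof < covM κ κ) (A : Set (Set Ordinal.{0}))
    (hA : A ∈ H.plus) :
    ∃ C ∈ H.plus, C ⊆ A ∧ pairsK κ C = pairsPrec κ C := by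
  obtain ⟨F, hFH, hFcofinal, hFcard⟩ := H.exists_cofinal_family
  have hcard : #(escapeSet κ A '' F) < Cardinal.lift.{1} (covM κ κ) :=
    mk_image_le.trans_lt (hFcard ▸ lift_lt.2 hcof)
  obtain ⟨x, -, hx⟩ :=
    exists_mem_sInter_of_mk_lt_covM hreg.pos.ne' (𝒟 := escapeSet κ A '' F)
    (by rintro _ ⟨D, hD, rfl⟩; exact denseOpen_escapeSet hreg hlt.le hA (hFH hD)) hcard
  refine ⟨chainSet (supK κ) A x, ⟨(sep_subset _ _).trans hA.1, fun hC => ?_⟩,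
    sep_subset _ _, pairsK_chainSet_eq_pairsPrec x⟩
  obtain ⟨D, hDF, hCD⟩ := hFcofinal _ hC
  obtain ⟨-, b, hbC, hbD⟩ := hx _ (mem_image_of_mem _ hDF)
  exact hbD (hCD hbC)

/-- Suppose `κ` is inaccessible and `H` is an ideal on `P_κ(λ)` with
`cof(H) < cov(M_{κ,κ})`, and let `A ∈ H⁺`. Then there is `C ∈ H⁺ ∩ P(A)` with
`[C]_κ² = [C]_≺²`. -/
theorem pairsK_eq_pairsPrec (κ lam : Cardinal.{0}) (hreg : κ.IsRegular) (huc : ℵ₀ < κ)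
    (hinacc : ∀ μ : Cardinal.{0}, μ < κ → 2 ^ μ < κ) (hlt : κ < lam)
    (H : IdealP κ lam) (hcof : H.cof < covM κ κ) (A : Set (Set Ordinal.{0}))
    (hA : A ∈ H.plus) :
    ∃ C ∈ H.plus, C ⊆ A ∧ pairsK κ C = pairsPrec κ C :=
  pairsK_eq_pairsPrec_general κ lam hreg hlt H hcof A hA

end PaperFormal
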